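/- Let γ_passive(N) = N² · P_BS-P · π² ϱ_f² ϱ_g² / (16σ²) and γ_active(N) = N · P_BS-A · P_A · π² ϱ_f² ϱ_g² / (16·(P_A σ_v² ϱ_f² + P_BS-A σ² ϱ_g² + σ² σ_v²)), with all parameters positive. Then γ_passive(N) ≥ γ_active(N) if and only if N ≥ (P_BS-A / P_BS-P) · P_A σ² / (P_A σ_v² ϱ_f² + P_BS-A σ² ϱ_g² + σ² σ_v²). -/

import Mathlib

/-! Both SNRs share the positive factor `π² ϱ_f² ϱ_g² / 16`; after cancelling it and one factor
of `N > 0`, the comparison is linear in `N`. -/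

lemma mul_div_le_sq_mul_div_iff {N P s Q D : ℝ} (hN : 0 < N) (hP : 0 < P) (hs : 0 < s)
    (hD : 0 < D) : N * Q / D ≤ N ^ 2 * P / s ↔ Q * s / (P * D) ≤ N := by
  calc N * Q / D ≤ N ^ 2 * P / s
      ↔ N * (Q / D) ≤ N * (N * P / s) := by ring_nf
    _ ↔ Q / D ≤ N * P / s := mul_le_mul_iff_right₀ hN
    _ ↔ Q * s ≤ N * (P * D) := by rw [div_le_div_iff₀ hD hs]; ring_nf
    _ ↔ Q * s / (P * D) ≤ N := (div_le_iff₀ (mul_pos hP hD)).symm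

theorem stmt_7 (N PBSP PBSA PA ϱf2 ϱg2 σ2 σv2 : ℝ)
    (hN : 0 < N) (hP : 0 < PBSP) (hA : 0 < PBSA) (hPA : 0 < PA)
    (hf : 0 < ϱf2) (hg : 0 < ϱg2) (hσ : 0 < σ2) (hσv : 0 < σv2) :
    N ^ 2 * PBSP * Real.pi ^ 2 * ϱf2 * ϱg2 / (16 * σ2) ≥
      N * PBSA * PA * Real.pi ^ 2 * ϱf2 * ϱg2 /
        (16 * (PA * σv2 * ϱf2 + PBSA * σ2 * ϱg2 + σ2 * σv2)) ↔
    N ≥ (PBSA / PBSP) * (PA * σ2) / (PA * σv2 * ϱf2 + PBSA * σ2 * ϱg2 + σ2 * σv2) := by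
  have hD : 0 < PA * σv2 * ϱf2 + PBSA * σ2 * ϱg2 + σ2 * σv2 := by positivity
  generalize PA * σv2 * ϱf2 + PBSA * σ2 * ϱg2 + σ2 * σv2 = D at hD ⊢
  have hc : 0 < Real.pi ^ 2 * ϱf2 * ϱg2 / 16 := by positivity
  have hpassive : N ^ 2 * PBSP * Real.pi ^ 2 * ϱf2 * ϱg2 / (16 * σ2) =
      Real.pi ^ 2 * ϱf2 * ϱg2 / 16 * (N ^ 2 * PBSP / σ2) := by ring
  have hactive : N * PBSA * PA * Real.pi ^ 2 * ϱf2 * ϱg2 / (16 * D) =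
      Real.pi ^ 2 * ϱf2 * ϱg2 / 16 * (N * (PBSA * PA) / D) := by ring
  have hthreshold : PBSA / PBSP * (PA * σ2) / D = PBSA * PA * σ2 / (PBSP * D) := by ring
  rw [hpassive, hactive, hthreshold, ge_iff_le, ge_iff_le, mul_le_mul_iff_right₀ hc]
  exact mul_div_le_sq_mul_div_iff hN hP hσ hD
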